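/- arXiv:2405.11452 — 2 statements merged into one kernel-verified Lean document; each statement's English description precedes it below -/
import Mathlib

section
/- Let $q \ge 1$ and let $\theta : \mathbb{Z} \to [0,\infty)$ with $\sum_{v \in \mathbb{Z}} \theta(v)^q < \infty$ and $\theta(v) \le 1$ for all $|v| \ge K$ for some $K$. Then for every integer $1 \le l \le q-1$ (assuming $q \ge 2$), $n^{-1 + l/q} \sum_{|v| \le n} \theta(v)^l \to 0$ as $n \to \infty$. -/
open Filter Finset

/-!
With `p = q / l > 1`, Hölder's inequality against the constant function bounds a sum of
`θ ^ l` over at most `3 n` points by `(∑ θ ^ q) ^ (1 / p) * (3 n) ^ (1 - 1 / p)`. Hence, after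
normalisation by `n ^ (1 / p - 1)`, the part of the window `[-n, n]` outside a fixed finite set
contributes at most `3` times the `1 / p`-th power of an `ℓ^q` tail, which is small, while the
fixed finite part is multiplied by `n ^ (1 / p - 1) → 0`.
-/

theorem sum_le_sum_rpow_rpow_mul_card_rpow {ι : Type*} (s : Finset ι) {f : ι → ℝ}
    (hf : ∀ i ∈ s, 0 ≤ f i) {p : ℝ} (hp : 1 < p) :
    ∑ i ∈ s, f i ≤ (∑ i ∈ s, f i ^ p) ^ (1 / p) * (#s : ℝ) ^ (1 - 1 / p) := by
  have hpq : p.HolderConjugate (1 - 1 / p)⁻¹ := by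
    rw [Real.holderConjugate_iff_eq_conjExponent hp, one_sub_div (by positivity), inv_div]
  simpa [Real.one_rpow] using
    Real.inner_le_Lp_mul_Lq_of_nonneg s hpq hf (g := fun _ => 1) fun _ _ => zero_le_one

theorem card_Icc_neg_natCast_le (n : ℕ) : (#(Icc (-n : ℤ) n) : ℝ) ≤ 2 * n + 1 := by
  rw [Int.card_Icc]
  exact_mod_cast (show (n + 1 - -(n : ℤ)).toNat ≤ 2 * n + 1 by omega)

theorem exists_subset_Icc_neg_natCast (s : Finset ℤ) : ∃ M : ℕ, s ⊆ Icc (-M : ℤ) M :=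
  ⟨s.sup Int.natAbs, fun v hv => by
    have : v.natAbs ≤ s.sup Int.natAbs := le_sup hv
    rw [mem_Icc]; omega⟩

section

variable {f : ℤ → ℝ} {p : ℝ}

theorem rpow_mul_sum_le_of_subset_Icc (hf : ∀ v, 0 ≤ f v) (hp : 1 < p) {n : ℕ} (hn : 1 ≤ n)
    {t : Finset ℤ} (ht : t ⊆ Icc (-n : ℤ) n) :
    (n : ℝ) ^ (1 / p - 1) * ∑ v ∈ t, f v ≤ 3 * (∑ v ∈ t, f v ^ p) ^ (1 / p) := by
  have hn' : (1 : ℝ) ≤ n := by exact_mod_cast hn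
  have hr : 0 ≤ 1 - 1 / p := by rw [sub_nonneg, div_le_one (by linarith)]; exact hp.le
  have hroot : 0 ≤ (∑ v ∈ t, f v ^ p) ^ (1 / p) :=
    Real.rpow_nonneg (sum_nonneg fun v _ => Real.rpow_nonneg (hf v) p) _
  have hcard : (#t : ℝ) ≤ 3 * n :=
    calc (#t : ℝ) ≤ #(Icc (-n : ℤ) n) := by exact_mod_cast card_le_card ht
      _ ≤ 3 * n := by linarith [card_Icc_neg_natCast_le n]
  calc (n : ℝ) ^ (1 / p - 1) * ∑ v ∈ t, f v
      ≤ (n : ℝ) ^ (1 / p - 1) * ((∑ v ∈ t, f v ^ p) ^ (1 / p) * (3 * n) ^ (1 - 1 / p)) := by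
        gcongr
        refine (sum_le_sum_rpow_rpow_mul_card_rpow t (fun v _ => hf v) hp).trans ?_
        gcongr
    _ = 3 ^ (1 - 1 / p) * (∑ v ∈ t, f v ^ p) ^ (1 / p) := by
        rw [Real.mul_rpow (by norm_num) (by positivity)]
        have : (n : ℝ) ^ (1 / p - 1) * (n : ℝ) ^ (1 - 1 / p) = 1 := by
          rw [← Real.rpow_add (by positivity)]; simp
        linear_combination (3 ^ (1 - 1 / p) * (∑ v ∈ t, f v ^ p) ^ (1 / p)) * this
    _ ≤ 3 * (∑ v ∈ t, f v ^ p) ^ (1 / p) := by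
        gcongr ?_ * _
        exact Real.rpow_le_self_of_one_le (by norm_num) (sub_le_self _ (by positivity))

theorem tendsto_rpow_mul_sum_Icc_of_summable_rpow (hf : ∀ v, 0 ≤ f v) (hp : 1 < p)
    (hsum : Summable fun v => f v ^ p) :
    Tendsto (fun n : ℕ => (n : ℝ) ^ (1 / p - 1) * ∑ v ∈ Icc (-n : ℤ) n, f v)
      atTop (nhds 0) := by
  have hp0 : 0 < p := by linarith
  have head (A : ℝ) : Tendsto (fun n : ℕ => (n : ℝ) ^ (1 / p - 1) * A) atTop (nhds 0) := by
    have hr : 0 < 1 - 1 / p := by rw [sub_pos, div_lt_one hp0]; exact hp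
    simpa [neg_sub] using
      ((tendsto_rpow_neg_atTop hr).comp tendsto_natCast_atTop_atTop).mul_const A
  rw [Metric.tendsto_atTop]
  intro ε hε
  obtain ⟨s₀, hs₀⟩ := summable_iff_vanishing.mp hsum (Set.Iio ((ε / 6) ^ p))
    (Iio_mem_nhds (by positivity))
  obtain ⟨M, hM⟩ := exists_subset_Icc_neg_natCast s₀
  obtain ⟨N, hN⟩ :=
    Metric.tendsto_atTop.mp (head (∑ v ∈ Icc (-M : ℤ) M, f v)) (ε / 2) (by positivity)
  refine ⟨max N (max M 1), fun n hn => ?_⟩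
  obtain ⟨hNn, hMn, hn1⟩ : N ≤ n ∧ M ≤ n ∧ 1 ≤ n := by simpa using hn
  have hsub : Icc (-M : ℤ) M ⊆ Icc (-n : ℤ) n := Icc_subset_Icc (by omega) (by omega)
  set t := Icc (-n : ℤ) n \ Icc (-M : ℤ) M
  have htail : (n : ℝ) ^ (1 / p - 1) * ∑ v ∈ t, f v < ε / 2 := by
    have hsmall : ∑ v ∈ t, f v ^ p < (ε / 6) ^ p :=
      hs₀ t (sdiff_disjoint.mono_right hM)
    calc (n : ℝ) ^ (1 / p - 1) * ∑ v ∈ t, f v ≤ 3 * (∑ v ∈ t, f v ^ p) ^ (1 / p) :=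
          rpow_mul_sum_le_of_subset_Icc hf hp hn1 sdiff_subset
      _ < 3 * ((ε / 6) ^ p) ^ (1 / p) := by
          gcongr
          exact sum_nonneg fun v _ => Real.rpow_nonneg (hf v) p
      _ = ε / 2 := by
          rw [← Real.rpow_mul (by positivity), mul_one_div_cancel hp0.ne', Real.rpow_one]; ring
  have hhead := hN n hNn
  have hnonneg (s : Finset ℤ) : 0 ≤ (n : ℝ) ^ (1 / p - 1) * ∑ v ∈ s, f v :=
    mul_nonneg (by positivity) (sum_nonneg fun v _ => hf v)
  rw [Real.dist_eq, sub_zero, abs_of_nonneg (hnonneg _)] at hhead ⊢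
  rw [← sum_sdiff hsub, mul_add]
  linarith

end

theorem fractional_power_partial_sums_tendsto_zero_general
    (q : ℕ) (l : ℕ) (hl1 : 1 ≤ l) (hlq : l ≤ q - 1)
    (θ : ℤ → ℝ) (hθ0 : ∀ v, 0 ≤ θ v)
    (hsum : Summable fun v : ℤ => θ v ^ q) :
    Tendsto (fun n : ℕ =>
        (n : ℝ) ^ (-1 + (l : ℝ) / q) * ∑ v ∈ Finset.Icc (-(n : ℤ)) n, θ v ^ l)
      atTop (nhds 0) := by
  have hl : (0 : ℝ) < l := by exact_mod_cast hl1
  have hp : 1 < (q : ℝ) / l := by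
    rw [one_lt_div hl]; exact_mod_cast (show l < q by omega)
  have hpow : ∀ v, (θ v ^ l) ^ ((q : ℝ) / l) = θ v ^ q := fun v => by
    rw [← Real.rpow_natCast, ← Real.rpow_mul (hθ0 v), mul_div_cancel₀ _ hl.ne',
      Real.rpow_natCast]
  have h := tendsto_rpow_mul_sum_Icc_of_summable_rpow (fun v => pow_nonneg (hθ0 v) l) hp
    (by simpa only [hpow] using hsum)
  rwa [one_div_div, ← neg_add_eq_sub] at h

/-- Key analytic estimate: if `θ ∈ ℓ^q` (and `θ ≤ 1` off a finite window), then for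
`1 ≤ l ≤ q - 1`, `n^{-1+l/q} ∑_{|v| ≤ n} θ(v)^l → 0`. -/
theorem fractional_power_partial_sums_tendsto_zero
    (q : ℕ) (hq : 1 ≤ q) (l : ℕ) (hl1 : 1 ≤ l) (hlq : l ≤ q - 1)
    (θ : ℤ → ℝ) (hθ0 : ∀ v, 0 ≤ θ v)
    (hsum : Summable fun v : ℤ => θ v ^ q)
    (K : ℕ) (hK : ∀ v : ℤ, K ≤ v.natAbs → θ v ≤ 1) :
    Tendsto (fun n : ℕ =>
        (n : ℝ) ^ (-1 + (l : ℝ) / q) * ∑ v ∈ Finset.Icc (-(n : ℤ)) n, θ v ^ l)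
      atTop (nhds 0) :=
  fractional_power_partial_sums_tendsto_zero_general q l hl1 hlq θ hθ0 hsum
end

section
/- Fix $n \ge 1$ and $k$ with $1 \le |k| \le n-1$. For $s,t \in [0,1]$ define $f_{kn}(s,t) = \frac{\lfloor ns \rfloor}{n} - (t \wedge s) + (t \wedge s)\frac{|k|}{n} + \frac{k}{n}\mathbf{1}_{\{k \le -1\}}$ if $t - s > \frac{k}{n}$, and $f_{kn}(s,t) = \frac{\lfloor nt \rfloor}{n} - (t \wedge s) + (t \wedge s)\frac{|k|}{n} - \frac{k}{n}\mathbf{1}_{\{k \ge 1\}}$ if $t - s \le \frac{k}{n}$. Then $\sup_{s,t \in [0,1]} |f_{kn}(s,t)| \le \frac{3|k|}{n}$. -/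
/-!
The floor term `⌊n a⌋ / n`, taken at `a = s` or `a = t`, lies less than `1/n ≤ |k|/n` below `a`,
and the branch condition on `t - s` is exactly what keeps `a` within `|k|/n` above `min t s`.
The other two terms, `min t s * |k| / n` and the indicator term, are each at most `|k|/n` in
absolute value.
-/

lemma sub_one_div_lt_floor_mul_div {n : ℕ} (hn : 0 < n) (a : ℝ) :
    a - 1 / n < (⌊(n : ℝ) * a⌋ : ℝ) / n := by
  have hn' : (0 : ℝ) < n := by exact_mod_cast hn
  rw [lt_div_iff₀ hn', sub_mul, one_div_mul_cancel hn'.ne', mul_comm]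
  linarith [Int.lt_floor_add_one ((n : ℝ) * a)]

lemma floor_mul_div_le {n : ℕ} (hn : 0 < n) (a : ℝ) :
    (⌊(n : ℝ) * a⌋ : ℝ) / n ≤ a := by
  have hn' : (0 : ℝ) < n := by exact_mod_cast hn
  rw [div_le_iff₀ hn', mul_comm]
  exact Int.floor_le _

lemma abs_floor_mul_div_sub_min_add_le {n : ℕ} (hn : 0 < n) {a m κ c : ℝ} (hκ : 1 ≤ κ)
    (hma : m ≤ a) (ham : a - m ≤ κ / n) (hm0 : 0 ≤ m) (hm1 : m ≤ 1) (hc : |c| ≤ κ / n) :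
    |(⌊(n : ℝ) * a⌋ : ℝ) / n - m + m * κ / n + c| ≤ 3 * κ / n := by
  have hn' : (0 : ℝ) < n := by exact_mod_cast hn
  have hfloor_lo := sub_one_div_lt_floor_mul_div hn a
  have hfloor_hi := floor_mul_div_le hn a
  have h1κ : 1 / (n : ℝ) ≤ κ / n := by gcongr
  have hmκ_lo : 0 ≤ m * κ / n := by positivity
  have hmκ_hi : m * κ / n ≤ κ / n := by
    rw [mul_div_assoc]
    exact mul_le_of_le_one_left (by positivity) hm1
  obtain ⟨hc_lo, hc_hi⟩ := abs_le.mp hc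
  have hκn : 0 ≤ κ / n := by positivity
  rw [abs_le, mul_div_assoc]
  constructor <;> linarith

lemma sub_min_le_abs_of_lt {x s t : ℝ} (h : x < t - s) : s - min t s ≤ |x| := by
  rcases le_total t s with hts | hst
  · rw [min_eq_left hts]
    linarith [neg_le_abs x]
  · rw [min_eq_right hst, sub_self]
    exact abs_nonneg x

lemma sub_min_le_abs_of_le {x s t : ℝ} (h : t - s ≤ x) : t - min t s ≤ |x| := by
  rcases le_total t s with hts | hst
  · rw [min_eq_left hts, sub_self]
    exact abs_nonneg x
  · rw [min_eq_right hst]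
    linarith [le_abs_self x]

lemma abs_ite_div_le {p : Prop} [Decidable p] (n : ℕ) (x : ℝ) :
    |if p then x / n else 0| ≤ |x| / n := by
  split_ifs
  · rw [abs_div, Nat.abs_cast]
  · rw [abs_zero]
    positivity

theorem kernel_fkn_bound_general (n : ℕ) (hn : 1 ≤ n) (k : ℤ)
    (hk1 : 1 ≤ |k|) :
    ∀ s ∈ Set.Icc (0:ℝ) 1, ∀ t ∈ Set.Icc (0:ℝ) 1,
      |if t - s > (k : ℝ) / n then
          (⌊(n : ℝ) * s⌋ : ℝ) / n - min t s + min t s * |(k : ℝ)| / n +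
            (if k ≤ -1 then (k : ℝ) / n else 0)
        else
          (⌊(n : ℝ) * t⌋ : ℝ) / n - min t s + min t s * |(k : ℝ)| / n -
            (if 1 ≤ k then (k : ℝ) / n else 0)| ≤ 3 * |(k : ℝ)| / n := by
  intro s ⟨hs0, hs1⟩ t ⟨ht0, ht1⟩
  have hκ : (1 : ℝ) ≤ |(k : ℝ)| := by exact_mod_cast hk1
  have hmin0 : 0 ≤ min t s := le_min ht0 hs0
  have hmin1 : min t s ≤ 1 := (min_le_right t s).trans hs1
  have habs : |(k : ℝ) / n| = |(k : ℝ)| / n := by rw [abs_div, Nat.abs_cast]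
  by_cases h : t - s > (k : ℝ) / n
  · rw [if_pos h]
    refine abs_floor_mul_div_sub_min_add_le hn hκ (min_le_right t s) ?_ hmin0 hmin1
      (abs_ite_div_le n k)
    exact habs ▸ sub_min_le_abs_of_lt h
  · rw [if_neg h, sub_eq_add_neg]
    refine abs_floor_mul_div_sub_min_add_le hn hκ (min_le_left t s) ?_ hmin0 hmin1
      ((abs_neg _).trans_le (abs_ite_div_le n k))
    exact habs ▸ sub_min_le_abs_of_le (not_lt.mp h)

/-- Uniform bound (B.14) on the kernels `f_{kn}` of Lemma B.2:
`sup_{s,t ∈ [0,1]} |f_{kn}(s,t)| ≤ 3|k|/n`. -/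
theorem kernel_fkn_bound (n : ℕ) (hn : 1 ≤ n) (k : ℤ)
    (hk1 : 1 ≤ |k|) (hkn : |k| ≤ (n : ℤ) - 1) :
    ∀ s ∈ Set.Icc (0:ℝ) 1, ∀ t ∈ Set.Icc (0:ℝ) 1,
      |if t - s > (k : ℝ) / n then
          (⌊(n : ℝ) * s⌋ : ℝ) / n - min t s + min t s * |(k : ℝ)| / n +
            (if k ≤ -1 then (k : ℝ) / n else 0)
        else
          (⌊(n : ℝ) * t⌋ : ℝ) / n - min t s + min t s * |(k : ℝ)| / n -
            (if 1 ≤ k then (k : ℝ) / n else 0)| ≤ 3 * |(k : ℝ)| / n :=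
  kernel_fkn_bound_general n hn k hk1
end
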